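/- arXiv:1709.00890 — 2 statements merged into one kernel-verified Lean document; each statement's English description precedes it below -/
import Mathlib

section
/- Let (Yₜ) be a stochastic process taking values in [0,b] ⊂ ℝ, let T = min{t ≥ 0 : Yₜ = 0}, and suppose E[T] < ∞. If there is ε > 0 such that for all t, E[Yₜ₊₁ − Yₜ | Yₜ > 0, Y₀,...,Yₜ] ≤ −ε, then E[T | Y₀] ≤ b/ε. -/
/-!
On the `ℱ t`-measurable event `{t < T}` the process is positive, so the drift hypothesis gives
`ε · P(s ∩ {t < T}) ≤ E[Y t - Y (t + 1); s ∩ {t < T}]` for every `s ∈ ℱ 0`. Summed over `t < n`,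
the left side is `ε · E[min T n; s]` and the right side telescopes to
`E[Y 0 - Y (min T n); s] ≤ E[Y 0; s]`. Letting `n → ∞` gives `ε · E[T; s] ≤ E[Y 0; s] ≤ b · P(s)`
for all `s ∈ σ(Y 0)`, which is the bound on the conditional expectation.
-/

open MeasureTheory Filter Finset Topology

theorem Finset.sum_range_ite_lt {M : Type*} [AddCommMonoid M] (g : ℕ → M) (c n : ℕ) :
    ∑ t ∈ range n, (if t < c then g t else 0) = ∑ t ∈ range (min c n), g t := by
  rw [← sum_filter]
  congr 1
  ext t
  simp [and_comm]

theorem Nat.lt_sInf_iff_forall_not {p : ℕ → Prop} (h : ∃ k, p k) (t : ℕ) :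
    t < sInf {k | p k} ↔ ∀ k ≤ t, ¬p k := by
  classical
  rw [Nat.sInf_def (s := {k | p k}) h, Nat.lt_find_iff]
  rfl

namespace MeasureTheory

variable {Ω : Type*} {m mΩ : MeasurableSpace Ω} {μ : Measure Ω} [IsFiniteMeasure μ]

theorem setIntegral_le_of_ae_condExp_le (hm : m ≤ mΩ) {f : Ω → ℝ} (hf : Integrable f μ)
    {s : Set Ω} (hs : MeasurableSet[m] s) {c : ℝ} (hc : ∀ᵐ ω ∂μ, ω ∈ s → μ[f | m] ω ≤ c) :
    ∫ ω in s, f ω ∂μ ≤ c * μ.real s := by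
  rw [← setIntegral_condExp hm hf hs]
  calc ∫ ω in s, μ[f | m] ω ∂μ ≤ ∫ _ in s, c ∂μ :=
        setIntegral_mono_ae_restrict integrable_condExp.integrableOn integrableOn_const
          ((ae_restrict_iff' (hm s hs)).2 hc)
    _ = c * μ.real s := by rw [setIntegral_const, smul_eq_mul, mul_comm]

theorem ae_condExp_le_of_forall_setIntegral_le (hm : m ≤ mΩ) {f : Ω → ℝ} (hf : Integrable f μ)
    {c : ℝ} (hc : ∀ s, MeasurableSet[m] s → ∫ ω in s, f ω ∂μ ≤ c * μ.real s) :
    μ[f | m] ≤ᵐ[μ] fun _ => c := by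
  have hcondExp : StronglyMeasurable[m] (μ[f | m]) := stronglyMeasurable_condExp
  refine ae_le_of_ae_le_trim (hm := hm) <| ae_le_of_forall_setIntegral_le
    (integrable_condExp.trim hm hcondExp) ((integrable_const c).trim hm stronglyMeasurable_const)
    fun s hs _ => ?_
  rw [← setIntegral_trim hm hcondExp hs, ← setIntegral_trim hm stronglyMeasurable_const hs,
    setIntegral_condExp hm hf hs, setIntegral_const, smul_eq_mul, mul_comm]
  exact hc s hs

end MeasureTheory

namespace AdditiveDrift

variable {Ω : Type*} {mΩ : MeasurableSpace Ω} {μ : Measure Ω} [IsFiniteMeasure μ]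
  {Y : ℕ → Ω → ℝ} {ℱ : Filtration ℕ mΩ} {b ε : ℝ}

noncomputable def zeroTime (Y : ℕ → Ω → ℝ) (ω : Ω) : ℕ := sInf {t | Y t ω = 0}

/-- The event `{t < zeroTime Y}`, written so that it is `ℱ t`-measurable even though `zeroTime`
takes the junk value `sInf ∅ = 0` on paths that never hit `0`. -/
def zeroFreeUpTo (Y : ℕ → Ω → ℝ) (t : ℕ) : Set Ω := {ω | ∀ k ≤ t, Y k ω ≠ 0}

theorem measurableSet_zeroFreeUpTo (hadapted : Adapted ℱ Y) (t : ℕ) :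
    MeasurableSet[ℱ t] (zeroFreeUpTo Y t) := by
  have : zeroFreeUpTo Y t = ⋂ k ∈ Set.Iic t, (Y k) ⁻¹' {0}ᶜ := by
    ext ω
    simp [zeroFreeUpTo]
  rw [this]
  exact .biInter (Set.to_countable _) fun k hk =>
    ((hadapted k).mono (ℱ.mono hk) le_rfl) (measurableSet_singleton 0).compl

theorem mem_zeroFreeUpTo_iff {ω : Ω} (hω : ∃ t, Y t ω = 0) (t : ℕ) :
    ω ∈ zeroFreeUpTo Y t ↔ t < zeroTime Y ω :=
  (Nat.lt_sInf_iff_forall_not hω t).symm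

theorem sum_indicator_zeroFreeUpTo {ω : Ω} (hω : ∃ t, Y t ω = 0) (g : ℕ → Ω → ℝ) (n : ℕ) :
    ∑ t ∈ range n, (zeroFreeUpTo Y t).indicator (g t) ω =
      ∑ t ∈ range (min (zeroTime Y ω) n), g t ω := by
  classical
  simp only [Set.indicator_apply, mem_zeroFreeUpTo_iff hω]
  exact sum_range_ite_lt (fun t => g t ω) _ n

theorem integrable_of_mem_Icc (hadapted : Adapted ℱ Y)
    (hrange : ∀ t, ∀ᵐ ω ∂μ, Y t ω ∈ Set.Icc 0 b) (t : ℕ) : Integrable (Y t) μ :=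
  .of_mem_Icc 0 b ((hadapted t).mono (ℱ.le t) le_rfl).aemeasurable (hrange t)

theorem mul_measureReal_le_setIntegral_sub (hadapted : Adapted ℱ Y)
    (hrange : ∀ t, ∀ᵐ ω ∂μ, Y t ω ∈ Set.Icc 0 b)
    (hdrift : ∀ t, ∀ᵐ ω ∂μ, 0 < Y t ω → (μ[fun ω => Y (t + 1) ω - Y t ω | ℱ t]) ω ≤ -ε)
    {t : ℕ} {s : Set Ω} (hs : MeasurableSet[ℱ t] s) :
    ε * μ.real (s ∩ zeroFreeUpTo Y t) ≤ ∫ ω in s ∩ zeroFreeUpTo Y t, (Y t ω - Y (t + 1) ω) ∂μ := by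
  have hint := integrable_of_mem_Icc hadapted hrange
  have hpos : ∀ᵐ ω ∂μ, ω ∈ s ∩ zeroFreeUpTo Y t →
      (μ[fun ω => Y (t + 1) ω - Y t ω | ℱ t]) ω ≤ -ε := by
    filter_upwards [hdrift t, hrange t] with ω hω hY hmem
    exact hω (hY.1.lt_of_ne (hmem.2 t le_rfl).symm)
  have hstep := setIntegral_le_of_ae_condExp_le (ℱ.le t)
    (f := fun ω => Y (t + 1) ω - Y t ω) ((hint (t + 1)).sub (hint t))
    (hs.inter (measurableSet_zeroFreeUpTo hadapted t)) hpos
  have hswap : ∫ ω in s ∩ zeroFreeUpTo Y t, (Y t ω - Y (t + 1) ω) ∂μ =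
      -∫ ω in s ∩ zeroFreeUpTo Y t, (Y (t + 1) ω - Y t ω) ∂μ := by
    simp only [← integral_neg, neg_sub]
  linarith

theorem mul_setIntegral_min_zeroTime_le (hadapted : Adapted ℱ Y)
    (hrange : ∀ t, ∀ᵐ ω ∂μ, Y t ω ∈ Set.Icc 0 b) (hreach : ∀ᵐ ω ∂μ, ∃ t, Y t ω = 0)
    (hdrift : ∀ t, ∀ᵐ ω ∂μ, 0 < Y t ω → (μ[fun ω => Y (t + 1) ω - Y t ω | ℱ t]) ω ≤ -ε)
    {s : Set Ω} (hs : MeasurableSet[ℱ 0] s) (n : ℕ) :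
    ε * ∫ ω in s, min (zeroTime Y ω : ℝ) n ∂μ ≤ ∫ ω in s, Y 0 ω ∂μ := by
  have hA t : MeasurableSet (zeroFreeUpTo Y t) := ℱ.le t _ (measurableSet_zeroFreeUpTo hadapted t)
  have hint t : Integrable (fun ω => Y t ω - Y (t + 1) ω) μ :=
    (integrable_of_mem_Icc hadapted hrange t).sub (integrable_of_mem_Icc hadapted hrange (t + 1))
  have hcount : ∀ᵐ ω ∂μ, min (zeroTime Y ω : ℝ) n =
      ∑ t ∈ range n, (zeroFreeUpTo Y t).indicator (fun _ => 1) ω := by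
    filter_upwards [hreach] with ω hω
    simp [sum_indicator_zeroFreeUpTo hω]
  have htelescope : ∀ᵐ ω ∂μ,
      ∑ t ∈ range n, (zeroFreeUpTo Y t).indicator (fun ω => Y t ω - Y (t + 1) ω) ω ≤ Y 0 ω := by
    filter_upwards [hreach, ae_all_iff.2 hrange] with ω hω hY
    rw [sum_indicator_zeroFreeUpTo hω, sum_range_sub' (fun t => Y t ω)]
    linarith [(hY (min (zeroTime Y ω) n)).1]
  calc ε * ∫ ω in s, min (zeroTime Y ω : ℝ) n ∂μ
      = ∑ t ∈ range n, ε * μ.real (s ∩ zeroFreeUpTo Y t) := by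
        rw [integral_congr_ae (ae_restrict_of_ae hcount),
          integral_finsetSum _
            fun t _ => ((integrable_const (1 : ℝ)).indicator (hA t)).integrableOn,
          mul_sum]
        refine sum_congr rfl fun t _ => ?_
        rw [setIntegral_indicator (hA t), setIntegral_const, smul_eq_mul, mul_one]
    _ ≤ ∑ t ∈ range n, ∫ ω in s ∩ zeroFreeUpTo Y t, (Y t ω - Y (t + 1) ω) ∂μ :=
        sum_le_sum fun t _ =>
          mul_measureReal_le_setIntegral_sub hadapted hrange hdrift (ℱ.mono (Nat.zero_le t) s hs)
    _ = ∫ ω in s,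
          ∑ t ∈ range n, (zeroFreeUpTo Y t).indicator (fun ω => Y t ω - Y (t + 1) ω) ω ∂μ := by
        rw [integral_finsetSum _ fun t _ => ((hint t).indicator (hA t)).integrableOn]
        exact sum_congr rfl fun t _ => (setIntegral_indicator (hA t)).symm
    _ ≤ ∫ ω in s, Y 0 ω ∂μ :=
        integral_mono_ae
          (integrable_finsetSum _ fun t _ => ((hint t).indicator (hA t)).integrableOn)
          (integrable_of_mem_Icc hadapted hrange 0).integrableOn (ae_restrict_of_ae htelescope)

theorem mul_setIntegral_zeroTime_le (hadapted : Adapted ℱ Y)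
    (hrange : ∀ t, ∀ᵐ ω ∂μ, Y t ω ∈ Set.Icc 0 b) (hreach : ∀ᵐ ω ∂μ, ∃ t, Y t ω = 0)
    (hTint : Integrable (fun ω => (zeroTime Y ω : ℝ)) μ)
    (hdrift : ∀ t, ∀ᵐ ω ∂μ, 0 < Y t ω → (μ[fun ω => Y (t + 1) ω - Y t ω | ℱ t]) ω ≤ -ε)
    {s : Set Ω} (hs : MeasurableSet[ℱ 0] s) :
    ε * ∫ ω in s, (zeroTime Y ω : ℝ) ∂μ ≤ ∫ ω in s, Y 0 ω ∂μ := by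
  have hmin : Tendsto (fun n : ℕ => ∫ ω in s, min (zeroTime Y ω : ℝ) n ∂μ) atTop
      (𝓝 (∫ ω in s, (zeroTime Y ω : ℝ) ∂μ)) :=
    integral_tendsto_of_tendsto_of_monotone
      (fun n => (hTint.inf (integrable_const (n : ℝ))).integrableOn) hTint.integrableOn
      (ae_of_all _ fun ω _ _ hnm => min_le_min_left _ (Nat.cast_le.2 hnm))
      (ae_of_all _ fun ω => tendsto_const_nhds.congr'
        ((eventually_ge_atTop (zeroTime Y ω)).mono fun _ hn =>
          (min_eq_left (Nat.cast_le.2 hn)).symm))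
  exact le_of_tendsto' (hmin.const_mul ε)
    (mul_setIntegral_min_zeroTime_le hadapted hrange hreach hdrift hs)

end AdditiveDrift

theorem additive_drift_upper_general {Ω : Type*} {mΩ : MeasurableSpace Ω} (μ : Measure Ω)
    [IsProbabilityMeasure μ] (Y : ℕ → Ω → ℝ) (ℱ : Filtration ℕ mΩ)
    (hadapted : Adapted ℱ Y) (b : ℝ)
    (hrange : ∀ t, ∀ᵐ ω ∂μ, Y t ω ∈ Set.Icc 0 b)
    (T : Ω → ℕ) (hT : ∀ ω, T ω = sInf {t | Y t ω = 0})
    (hreach : ∀ᵐ ω ∂μ, ∃ t, Y t ω = 0)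
    (hTint : Integrable (fun ω => (T ω : ℝ)) μ)
    (ε : ℝ) (hε : 0 < ε)
    (hdrift : ∀ t, ∀ᵐ ω ∂μ, 0 < Y t ω →
      (μ[fun ω => Y (t + 1) ω - Y t ω | ℱ t]) ω ≤ -ε) :
    ∀ᵐ ω ∂μ, (μ[fun ω => (T ω : ℝ) | MeasurableSpace.comap (Y 0) inferInstance]) ω ≤
      b / ε := by
  obtain rfl : T = AdditiveDrift.zeroTime Y := funext hT
  have hY0 : MeasurableSpace.comap (Y 0) inferInstance ≤ ℱ 0 := (hadapted 0).comap_le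
  refine ae_condExp_le_of_forall_setIntegral_le (hY0.trans (ℱ.le 0)) hTint fun s hs => ?_
  have hY0_le : ∫ ω in s, Y 0 ω ∂μ ≤ b * μ.real s := by
    calc ∫ ω in s, Y 0 ω ∂μ ≤ ∫ _ in s, b ∂μ :=
          integral_mono_ae (AdditiveDrift.integrable_of_mem_Icc hadapted hrange 0).integrableOn
            integrableOn_const (ae_restrict_of_ae ((hrange 0).mono fun _ h => h.2))
      _ = b * μ.real s := by rw [setIntegral_const, smul_eq_mul, mul_comm]
  calc ∫ ω in s, (AdditiveDrift.zeroTime Y ω : ℝ) ∂μ ≤ (∫ ω in s, Y 0 ω ∂μ) / ε := by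
        rw [le_div_iff₀ hε, mul_comm]
        exact AdditiveDrift.mul_setIntegral_zeroTime_le hadapted hrange hreach hTint hdrift
          (hY0 s hs)
    _ ≤ b * μ.real s / ε := by gcongr
    _ = b / ε * μ.real s := by ring

theorem additive_drift_upper {Ω : Type*} {mΩ : MeasurableSpace Ω} (μ : Measure Ω)
    [IsProbabilityMeasure μ] (Y : ℕ → Ω → ℝ) (ℱ : Filtration ℕ mΩ)
    (hadapted : Adapted ℱ Y) (b : ℝ) (hb : 0 < b)
    (hrange : ∀ t, ∀ᵐ ω ∂μ, Y t ω ∈ Set.Icc 0 b)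
    (T : Ω → ℕ) (hT : ∀ ω, T ω = sInf {t | Y t ω = 0})
    (hreach : ∀ᵐ ω ∂μ, ∃ t, Y t ω = 0)
    (hTint : Integrable (fun ω => (T ω : ℝ)) μ)
    (ε : ℝ) (hε : 0 < ε)
    (hdrift : ∀ t, ∀ᵐ ω ∂μ, 0 < Y t ω →
      (μ[fun ω => Y (t + 1) ω - Y t ω | ℱ t]) ω ≤ -ε) :
    ∀ᵐ ω ∂μ, (μ[fun ω => (T ω : ℝ) | MeasurableSpace.comap (Y 0) inferInstance]) ω ≤
      b / ε :=
  additive_drift_upper_general μ Y ℱ hadapted b hrange T hT hreach hTint ε hε hdrift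
end

section
/- Consider a sequential process over levels 1,...,m where, whenever the process is at level i < m, it moves to some level j > i with probability at least sᵢ > 0 in each step (independently given the history), and the process never decreases in level. Then the expected number of steps until reaching level m is at most Σ_{i=1}^{m−1} 1/sᵢ. -/
/-!
The hitting time of level `m` is at most the total time spent on the levels `1, …, m - 1`, so
its expectation is at most `∑ i, ∑' t, P(L t = i)`. Each step spent on level `i` is followed by a
jump above `i` with conditional probability at least `s i`, so `s i · ∑' t, P(L t = i)` is at most
the expected number of jumps above `i`; since levels never decrease, there is at most one such
jump, and the expected time on level `i` is at most `1 / s i`.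
-/

open MeasureTheory Function
open scoped ENNReal

section

variable {Ω : Type*} {mΩ : MeasurableSpace Ω} {μ : Measure Ω}

theorem ofReal_mul_measure_le_measure_inter_of_le_condExp_indicator [IsFiniteMeasure μ]
    {m : MeasurableSpace Ω} (hm : m ≤ mΩ) {E B : Set Ω} (hE : MeasurableSet[m] E)
    (hB : MeasurableSet[mΩ] B) {c : ℝ}
    (hc : ∀ᵐ ω ∂μ, ω ∈ E → c ≤ μ[B.indicator (fun _ => (1 : ℝ)) | m] ω) :
    ENNReal.ofReal c * μ E ≤ μ (E ∩ B) := by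
  have hreal : c * μ.real E ≤ μ.real (E ∩ B) :=
    calc c * μ.real E = ∫ _ in E, c ∂μ := by rw [setIntegral_const, smul_eq_mul, mul_comm]
      _ ≤ ∫ ω in E, μ[B.indicator (fun _ => (1 : ℝ)) | m] ω ∂μ :=
        setIntegral_mono_ae_restrict (integrableOn_const (measure_ne_top μ _))
          integrable_condExp.integrableOn ((ae_restrict_iff' (hm E hE)).2 hc)
      _ = ∫ ω in E, B.indicator (fun _ => (1 : ℝ)) ω ∂μ :=
        setIntegral_condExp hm ((integrable_const 1).indicator hB) hE
      _ = μ.real (E ∩ B) := by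
        rw [setIntegral_indicator hB, setIntegral_const, smul_eq_mul, mul_one]
  calc ENNReal.ofReal c * μ E = ENNReal.ofReal (c * μ.real E) := by
        rw [ENNReal.ofReal_mul' measureReal_nonneg, ofReal_measureReal]
    _ ≤ μ (E ∩ B) := by
        rw [← ofReal_measureReal (μ := μ) (s := E ∩ B)]
        exact ENNReal.ofReal_le_ofReal hreal

theorem pairwise_disjoint_setOf_eq_and_lt_succ {L : ℕ → Ω → ℕ}
    (hmono : ∀ ω, Monotone (L · ω)) (i : ℕ) :
    Pairwise (Disjoint on fun t => {ω | L t ω = i ∧ i < L (t + 1) ω}) := by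
  refine (pairwise_disjoint_on _).2 fun t t' htt' => Set.disjoint_left.2 ?_
  rintro ω ⟨-, hexit⟩ ⟨hlevel, -⟩
  have : L (t + 1) ω ≤ L t' ω := hmono ω (Nat.succ_le_of_lt htt')
  omega

theorem tsum_measure_setOf_eq_le_ofReal_one_div [IsProbabilityMeasure μ]
    {ℱ : Filtration ℕ mΩ} {L : ℕ → Ω → ℕ} (hadapted : Adapted ℱ L)
    (hmono : ∀ ω, Monotone (L · ω)) {i : ℕ} {c : ℝ} (hc : 0 < c)
    (hstep : ∀ t, ∀ᵐ ω ∂μ, L t ω = i →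
      c ≤ μ[{ω | i < L (t + 1) ω}.indicator (fun _ => (1 : ℝ)) | ℱ t] ω) :
    ∑' t, μ {ω | L t ω = i} ≤ ENNReal.ofReal (1 / c) := by
  have hL : ∀ t, Measurable (L t) := fun t => (hadapted t).mono (ℱ.le t) le_rfl
  have hexits : ∑' t, μ {ω | L t ω = i ∧ i < L (t + 1) ω} ≤ 1 :=
    (tsum_meas_le_meas_iUnion_of_disjoint μ
      (fun t => (hL t (measurableSet_singleton i)).inter (hL (t + 1) measurableSet_Ioi))
      (pairwise_disjoint_setOf_eq_and_lt_succ hmono i)).trans prob_le_one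
  rw [one_div, ENNReal.ofReal_inv_of_pos hc, ENNReal.le_inv_iff_mul_le, mul_comm,
    ← ENNReal.tsum_mul_left]
  exact (ENNReal.tsum_le_tsum fun t =>
    ofReal_mul_measure_le_measure_inter_of_le_condExp_indicator (ℱ.le t)
      (hadapted t (measurableSet_singleton i)) (hL (t + 1) measurableSet_Ioi) (hstep t)).trans
    hexits

theorem lintegral_natCast_le_tsum_measure {T : Ω → ℕ} {S : ℕ → Set Ω}
    (hS : ∀ t, MeasurableSet (S t)) (hT : ∀ t ω, t < T ω → ω ∈ S t) :
    ∫⁻ ω, (T ω : ℝ≥0∞) ∂μ ≤ ∑' t, μ (S t) := by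
  have hpointwise : ∀ ω, (T ω : ℝ≥0∞) ≤ ∑' t, (S t).indicator 1 ω := fun ω =>
    calc (T ω : ℝ≥0∞) = ∑ t ∈ Finset.range (T ω), (S t).indicator 1 ω := by
          rw [Finset.sum_congr rfl fun t ht =>
            Set.indicator_of_mem (hT t ω (Finset.mem_range.1 ht)) 1]
          simp
      _ ≤ ∑' t, (S t).indicator 1 ω := ENNReal.sum_le_tsum _
  calc ∫⁻ ω, (T ω : ℝ≥0∞) ∂μ ≤ ∫⁻ ω, ∑' t, (S t).indicator 1 ω ∂μ := lintegral_mono hpointwise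
    _ = ∑' t, μ (S t) := by
      rw [lintegral_tsum fun t => (measurable_one.indicator (hS t)).aemeasurable]
      exact tsum_congr fun t => lintegral_indicator_one (hS t)

end

theorem fitness_levels_upper_bound_general {Ω : Type*} {mΩ : MeasurableSpace Ω} (μ : Measure Ω)
    [IsProbabilityMeasure μ] (m : ℕ)
    (L : ℕ → Ω → ℕ) (ℱ : Filtration ℕ mΩ) (hadapted : Adapted ℱ L)
    (hrange : ∀ t ω, L t ω ∈ Set.Icc 1 m)
    (hmono : ∀ t ω, L t ω ≤ L (t + 1) ω)
    (s : ℕ → ℝ) (hs : ∀ i, 1 ≤ i → i < m → 0 < s i)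
    (hstep : ∀ t i, 1 ≤ i → i < m → ∀ᵐ ω ∂μ, L t ω = i →
      s i ≤ (μ[Set.indicator {ω | i < L (t + 1) ω} (fun _ => (1 : ℝ)) | ℱ t]) ω)
    (T : Ω → ℕ) (hT : ∀ ω, T ω = sInf {t | L t ω = m}) :
    (∫⁻ ω, (T ω : ℝ≥0∞) ∂μ) ≤ ENNReal.ofReal (∑ i ∈ Finset.Ico 1 m, 1 / s i) := by
  have hL : ∀ t, Measurable (L t) := fun t => (hadapted t).mono (ℱ.le t) le_rfl
  have hbefore : ∀ t ω, t < T ω → L t ω ∈ Finset.Ico 1 m := fun t ω ht => by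
    rw [hT ω] at ht
    have hne : L t ω ≠ m := Nat.notMem_of_lt_sInf (s := {t | L t ω = m}) ht
    have := hrange t ω
    simp only [Set.mem_Icc, Finset.mem_Ico] at this ⊢
    omega
  calc ∫⁻ ω, (T ω : ℝ≥0∞) ∂μ ≤ ∑' t, μ (L t ⁻¹' ↑(Finset.Ico 1 m)) :=
        lintegral_natCast_le_tsum_measure (fun t => hL t (.of_discrete)) hbefore
    _ = ∑' t, ∑ i ∈ Finset.Ico 1 m, μ {ω | L t ω = i} :=
        tsum_congr fun t => (sum_measure_preimage_singleton _ fun i _ =>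
          hL t (measurableSet_singleton i)).symm
    _ = ∑ i ∈ Finset.Ico 1 m, ∑' t, μ {ω | L t ω = i} :=
        Summable.tsum_finsetSum fun _ _ => ENNReal.summable
    _ ≤ ∑ i ∈ Finset.Ico 1 m, ENNReal.ofReal (1 / s i) := Finset.sum_le_sum fun i hi => by
        obtain ⟨hi1, him⟩ := Finset.mem_Ico.1 hi
        exact tsum_measure_setOf_eq_le_ofReal_one_div hadapted
          (fun ω => monotone_nat_of_le_succ (hmono · ω)) (hs i hi1 him) (hstep · i hi1 him)
    _ = ENNReal.ofReal (∑ i ∈ Finset.Ico 1 m, 1 / s i) := by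
        refine (ENNReal.ofReal_sum_of_nonneg fun i hi => ?_).symm
        obtain ⟨hi1, him⟩ := Finset.mem_Ico.1 hi
        exact (one_div_pos.2 (hs i hi1 him)).le

theorem fitness_levels_upper_bound {Ω : Type*} {mΩ : MeasurableSpace Ω} (μ : Measure Ω)
    [IsProbabilityMeasure μ] (m : ℕ) (hm : 1 ≤ m)
    (L : ℕ → Ω → ℕ) (ℱ : Filtration ℕ mΩ) (hadapted : Adapted ℱ L)
    (hrange : ∀ t ω, L t ω ∈ Set.Icc 1 m)
    (hmono : ∀ t ω, L t ω ≤ L (t + 1) ω)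
    (s : ℕ → ℝ) (hs : ∀ i, 1 ≤ i → i < m → 0 < s i)
    (hstep : ∀ t i, 1 ≤ i → i < m → ∀ᵐ ω ∂μ, L t ω = i →
      s i ≤ (μ[Set.indicator {ω | i < L (t + 1) ω} (fun _ => (1 : ℝ)) | ℱ t]) ω)
    (T : Ω → ℕ) (hT : ∀ ω, T ω = sInf {t | L t ω = m}) :
    (∫⁻ ω, (T ω : ℝ≥0∞) ∂μ) ≤ ENNReal.ofReal (∑ i ∈ Finset.Ico 1 m, 1 / s i) :=
  fitness_levels_upper_bound_general μ m L ℱ hadapted hrange hmono s hs hstep T hT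
end
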